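/- (Continuation property.) Let p be a probability potential on a family of compatible frames and let Λ ≤ Θ ≤ d(p). Then π_Θ(p) = p_{Θ|Λ} · π_Λ(p). -/

import Mathlib

open scoped NNReal

/-- A family of compatible frames (f.c.f.): a collection of finite nonempty frames
together with (unique) refinings between them, closed under composition, containing
identities, with minimal common refinements (binary joins). -/
structure FCF where
  /-- the frames of the family -/
  Frame : Type
  /-- the elements of each frame -/
  El : Frame → Type
  elFintype : ∀ Θ, Fintype (El Θ)
  elNonempty : ∀ Θ, Nonempty (El Θ)
  /-- `le Θ Λ` holds iff the family contains a refining of `Θ` to `Λ`. -/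
  le : Frame → Frame → Prop
  le_refl : ∀ Θ, le Θ Θ
  le_trans : ∀ {Θ Λ Ξ}, le Θ Λ → le Λ Ξ → le Θ Ξ
  le_antisymm : ∀ {Θ Λ}, le Θ Λ → le Λ Θ → Θ = Λ
  /-- the (unique) refining map of `Θ` to `Λ`, when `le Θ Λ` -/
  τ : ∀ {Θ Λ}, le Θ Λ → El Θ → Set (El Λ)
  τ_nonempty : ∀ {Θ Λ} (h : le Θ Λ) (θ : El Θ), (τ h θ).Nonempty
  τ_disjoint : ∀ {Θ Λ} (h : le Θ Λ) (θ θ' : El Θ), θ ≠ θ' → τ h θ ∩ τ h θ' = ∅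
  τ_cover : ∀ {Θ Λ} (h : le Θ Λ) (x : El Λ), ∃ θ, x ∈ τ h θ
  /-- the identity refining -/
  τ_refl : ∀ {Θ} (h : le Θ Θ) (θ : El Θ), τ h θ = {θ}
  /-- closure under composition of refinings -/
  τ_comp : ∀ {Θ Λ Ξ} (h₁ : le Θ Λ) (h₂ : le Λ Ξ) (h₃ : le Θ Ξ) (θ : El Θ),
    τ h₃ θ = ⋃ lam ∈ τ h₁ θ, τ h₂ lam
  /-- identity of coarsenings: two coarsenings of a frame with the same blocks coincide -/
  coarsening_unique : ∀ {Θ₁ Θ₂ Λ} (h₁ : le Θ₁ Λ) (h₂ : le Θ₂ Λ),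
    (∀ θ₁, ∃ θ₂, τ h₁ θ₁ = τ h₂ θ₂) → (∀ θ₂, ∃ θ₁, τ h₁ θ₁ = τ h₂ θ₂) → Θ₁ = Θ₂
  /-- minimal common refinement of two frames -/
  sup : Frame → Frame → Frame
  le_sup_left : ∀ Θ Λ, le Θ (sup Θ Λ)
  le_sup_right : ∀ Θ Λ, le Λ (sup Θ Λ)
  sup_le : ∀ {Θ Λ Ξ}, le Θ Ξ → le Λ Ξ → le (sup Θ Λ) Ξ
  /-- every element of the minimal common refinement is the (unique) intersection point
  of a block of each factor -/
  sup_atom : ∀ {Θ Λ} (h₁ : le Θ (sup Θ Λ)) (h₂ : le Λ (sup Θ Λ)) (x : El (sup Θ Λ)),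
    ∃ (θ : El Θ) (lam : El Λ), τ h₁ θ ∩ τ h₂ lam = {x}

namespace FCF

instance (F : FCF) (Θ : F.Frame) : Fintype (F.El Θ) := F.elFintype Θ

instance (F : FCF) (Θ : F.Frame) : Nonempty (F.El Θ) := F.elNonempty Θ

instance instSemilatticeSup (F : FCF) : SemilatticeSup F.Frame where
  le := F.le
  le_refl := F.le_refl
  le_trans := fun _ _ _ => F.le_trans
  le_antisymm := fun _ _ => F.le_antisymm
  sup := F.sup
  le_sup_left := F.le_sup_left
  le_sup_right := F.le_sup_right
  sup_le := fun _ _ _ h h' => F.sup_le h h'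

/-- the indicator potential `f_p` of the support of a potential -/
noncomputable def fpot {X : Type} (p : X → ℝ≥0) : X → ℝ≥0 := fun x =>
  haveI := Classical.propDecidable (0 < p x)
  if 0 < p x then 1 else 0

/-- the support of a potential -/
def psupp {X : Type} (p : X → ℝ≥0) : Set X := {x | 0 < p x}

/-- the likelihood (plausibility of singletons) function of a set potential -/
noncomputable def plfn {X : Type} (m : Set X → ℝ≥0) : X → ℝ≥0 :=
  fun x => ∑ᶠ (S : Set X) (_ : x ∈ S), m S

variable (F : FCF)

/-- `θ` and `lam` are compatible: their refinings to the minimal common refinement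
of the two frames intersect. -/
def compat {Θ Λ : F.Frame} (θ : F.El Θ) (lam : F.El Λ) : Prop :=
  (F.τ (F.le_sup_left Θ Λ) θ ∩ F.τ (F.le_sup_right Θ Λ) lam).Nonempty

/-- `(θ₁, θ₂, lam) ∈ R(Θ₁, Θ₂, Λ)`: joint compatibility of a triple. -/
def compat3 {Θ₁ Θ₂ Λ : F.Frame} (θ₁ : F.El Θ₁) (θ₂ : F.El Θ₂) (lam : F.El Λ) : Prop :=
  (F.τ (F.le_trans (F.le_sup_left Θ₁ Θ₂) (F.le_sup_left (F.sup Θ₁ Θ₂) Λ)) θ₁ ∩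
    F.τ (F.le_trans (F.le_sup_right Θ₁ Θ₂) (F.le_sup_left (F.sup Θ₁ Θ₂) Λ)) θ₂ ∩
    F.τ (F.le_sup_right (F.sup Θ₁ Θ₂) Λ) lam).Nonempty

/-- `Θ₁ ⊥ Θ₂ | Λ` : conditional independence of two frames given a third,
`R_λ(Θ₁,Θ₂) = R_λ(Θ₁) × R_λ(Θ₂)` for every `λ ∈ Λ`. -/
def CondIndep (Θ₁ Θ₂ Λ : F.Frame) : Prop :=
  ∀ (lam : F.El Λ) (θ₁ : F.El Θ₁) (θ₂ : F.El Θ₂),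
    F.compat3 θ₁ θ₂ lam ↔ (F.compat θ₁ lam ∧ F.compat θ₂ lam)

/-- joint compatibility of a family of elements together with `lam`. -/
def compatFam {ι : Type} {Θ : ι → F.Frame} {Λ : F.Frame}
    (θ : ∀ i, F.El (Θ i)) (lam : F.El Λ) : Prop :=
  ∃ (Ξ : F.Frame) (hΘ : ∀ i, F.le (Θ i) Ξ) (hΛ : F.le Λ Ξ) (x : F.El Ξ),
    (∀ i, x ∈ F.τ (hΘ i) (θ i)) ∧ x ∈ F.τ hΛ lam

/-- `⊥ {Θ_i : i ∈ ι} | Λ` : conditional independence of a family of frames given `Λ`,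
`R_λ(Θ₁,…,Θₙ) = R_λ(Θ₁) × ⋯ × R_λ(Θₙ)` for every `λ ∈ Λ`. -/
def CondIndepFam {ι : Type} (Θ : ι → F.Frame) (Λ : F.Frame) : Prop :=
  ∀ (lam : F.El Λ) (θ : ∀ i, F.El (Θ i)),
    F.compatFam θ lam ↔ ∀ i, F.compat (θ i) lam

/-- `t_Λ(x)`, the unique element of the coarsening `Λ` whose block contains `x`. -/
noncomputable def proj {Λ Θ : F.Frame} (h : F.le Λ Θ) (x : F.El Θ) : F.El Λ :=
  (F.τ_cover h x).choose

/-- probability potentials on the frame `Θ` -/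
abbrev Pot (Θ : F.Frame) : Type := F.El Θ → ℝ≥0

/-- the combination of two probability potentials, on the join of their domains -/
noncomputable def combine {Θ₁ Θ₂ : F.Frame} (p₁ : F.Pot Θ₁) (p₂ : F.Pot Θ₂) :
    F.Pot (F.sup Θ₁ Θ₂) :=
  fun x => p₁ (F.proj (F.le_sup_left Θ₁ Θ₂) x) * p₂ (F.proj (F.le_sup_right Θ₁ Θ₂) x)

/-- the transport `π_Λ(p)` of a probability potential to the frame `Λ` -/
noncomputable def transport {Θ : F.Frame} (p : F.Pot Θ) (Λ : F.Frame) : F.Pot Λ :=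
  fun lam => ∑ᶠ (θ : F.El Θ) (_ : F.compat θ lam), p θ

/-- the max-transport `t^max_Λ(p)` of a probability potential to the frame `Λ` -/
noncomputable def maxTransport {Θ : F.Frame} (p : F.Pot Θ) (Λ : F.Frame) : F.Pot Λ :=
  fun lam => ⨆ (θ : F.El Θ) (_ : F.compat θ lam), p θ

/-- combination of two set potentials, on the join of their domains -/
noncomputable def setCombine {Θ₁ Θ₂ : F.Frame} (m₁ : Set (F.El Θ₁) → ℝ≥0)
    (m₂ : Set (F.El Θ₂) → ℝ≥0) : Set (F.El (F.sup Θ₁ Θ₂)) → ℝ≥0 :=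
  fun S => ∑ᶠ (S₁ : Set (F.El Θ₁)) (S₂ : Set (F.El Θ₂))
    (_ : (⋃ θ ∈ S₁, F.τ (F.le_sup_left Θ₁ Θ₂) θ) ∩
         (⋃ θ ∈ S₂, F.τ (F.le_sup_right Θ₁ Θ₂) θ) = S),
    m₁ S₁ * m₂ S₂

/-- the conditional `p_{Θ|Λ} = π_Θ(p) · (π_Λ(p))⁻¹` of `p` for `Θ` given `Λ ≤ Θ` -/
noncomputable def condl {Δ : F.Frame} (p : F.Pot Δ) {Λ Θ : F.Frame} (h : F.le Λ Θ) :
    F.Pot Θ :=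
  fun θ => F.transport p Θ θ * (F.transport p Λ (F.proj h θ))⁻¹

/-- the conditional `p_{Θ|Λ} = π_{Θ∨Λ}(p) · (π_Λ(p))⁻¹` of `p` for arbitrary `Θ` given `Λ` -/
noncomputable def condl2 {Δ : F.Frame} (p : F.Pot Δ) (Θ Λ : F.Frame) :
    F.Pot (F.sup Θ Λ) :=
  fun x => F.transport p (F.sup Θ Λ) x *
    (F.transport p Λ (F.proj (F.le_sup_right Θ Λ) x))⁻¹

/-- the solution set `s_p^Λ(lam)`: maximizers of `p` among elements compatible with `lam` -/
noncomputable def solSet {Θ : F.Frame} (p : F.Pot Θ) (Λ : F.Frame) (lam : F.El Λ) :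
    Set (F.El Θ) :=
  {θ | F.compat θ lam ∧ p θ = F.maxTransport p Λ lam}

end FCF

/-
Continuation is the identity `a = (a / b) * b`, which holds as soon as `b = 0` forces `a = 0`.
Here `a = π_Θ(p)(θ)` and `b = π_Λ(p)(t_Λ(θ))`, and `a ≤ b`: for `Θ ≤ d(p)` an element `δ ∈ d(p)`
is compatible with `θ` iff `δ` lies in the block of `θ`, and the block of `θ` lies inside the
block of `t_Λ(θ)`.
-/

namespace FCF

section

variable (F : FCF)

lemma τ_eq_singleton_of_mem {Θ Λ : F.Frame} (h : F.le Θ Λ) (h' : F.le Λ Θ) {θ : F.El Θ}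
    {x : F.El Λ} (hx : x ∈ F.τ h θ) : F.τ h' x = {θ} := by
  have hcomp := F.τ_comp h h' (F.le_refl Θ) θ
  rw [F.τ_refl] at hcomp
  refine (F.τ_nonempty h' x).subset_singleton_iff.mp fun y hy => ?_
  rw [hcomp]
  exact Set.mem_biUnion hx hy

lemma mem_τ_iff_mem_τ {Θ Λ : F.Frame} (h : F.le Θ Λ) (h' : F.le Λ Θ) (θ : F.El Θ)
    (x : F.El Λ) : θ ∈ F.τ h' x ↔ x ∈ F.τ h θ := by
  refine ⟨fun hθ => ?_, fun hx => by rw [F.τ_eq_singleton_of_mem h h' hx]; rfl⟩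
  obtain ⟨θ', hθ'⟩ := F.τ_cover h x
  rw [F.τ_eq_singleton_of_mem h h' hθ'] at hθ
  rwa [hθ]

lemma mem_τ_proj {Λ Θ : F.Frame} (h : F.le Λ Θ) (x : F.El Θ) : x ∈ F.τ h (F.proj h x) :=
  (F.τ_cover h x).choose_spec

lemma compat_iff_mem_τ {Θ Δ : F.Frame} (h : F.le Θ Δ) (δ : F.El Δ) (θ : F.El Θ) :
    F.compat δ θ ↔ δ ∈ F.τ h θ := by
  have hsup : F.le (F.sup Δ Θ) Δ := F.sup_le (F.le_refl Δ) h
  rw [F.τ_comp (F.le_sup_right Δ Θ) hsup h, Set.mem_iUnion₂]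
  simp only [compat, Set.Nonempty, Set.mem_inter_iff,
    F.mem_τ_iff_mem_τ (F.le_sup_left Δ Θ) hsup, exists_prop]
  exact exists_congr fun _ => and_comm

lemma compat_proj_of_compat {Δ Θ Λ : F.Frame} (hΛΘ : F.le Λ Θ) (hΘΔ : F.le Θ Δ)
    {δ : F.El Δ} {θ : F.El Θ} (hδ : F.compat δ θ) : F.compat δ (F.proj hΛΘ θ) := by
  rw [F.compat_iff_mem_τ hΘΔ] at hδ
  rw [F.compat_iff_mem_τ (F.le_trans hΛΘ hΘΔ), F.τ_comp hΛΘ hΘΔ]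
  exact Set.mem_biUnion (F.mem_τ_proj hΛΘ θ) hδ

lemma transport_le_transport_proj {Δ Θ Λ : F.Frame} (hΛΘ : F.le Λ Θ) (hΘΔ : F.le Θ Δ)
    (p : F.Pot Δ) (θ : F.El Θ) : F.transport p Θ θ ≤ F.transport p Λ (F.proj hΛΘ θ) := by
  classical
  refine finsum_le_finsum' (Set.toFinite _) (Set.toFinite _) fun δ => ?_
  simp only [finsum_eq_if]
  split_ifs with hθ hΛ
  · rfl
  · exact absurd (F.compat_proj_of_compat hΛΘ hΘΔ hθ) hΛ
  · exact zero_le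
  · rfl

end

/-- (Continuation property.) For `Λ ≤ Θ ≤ d(p)`,
`π_Θ(p) = p_{Θ|Λ} · π_Λ(p)`. -/
theorem condl_continuation (F : FCF) (Δ Θ Λ : F.Frame)
    (hΛΘ : F.le Λ Θ) (hΘΔ : F.le Θ Δ) (p : F.Pot Δ) :
    F.transport p Θ = fun θ => F.condl p hΛΘ θ * F.transport p Λ (F.proj hΛΘ θ) := by
  funext θ
  rw [condl, ← div_eq_mul_inv]
  refine (div_mul_cancel_of_imp fun hzero => ?_).symm
  exact le_zero_iff.mp (hzero ▸ F.transport_le_transport_proj hΛΘ hΘΔ p θ)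

end FCF
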